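/- Let X be a topological space such that every point of X has a cozero set neighbourhood with w-compact closure. Then the complete regularisation ρX is locally compact. -/

import Mathlib

open Topology

/-- The inseparability-by-bounded-continuous-functions setoid on a topological space. -/
def crSetoid (X : Type*) [TopologicalSpace X] : Setoid X where
  r x y := ∀ f : BoundedContinuousFunction X ℝ, f x = f y
  iseqv := ⟨fun _ _ => rfl, fun h f => (h f).symm, fun h1 h2 f => (h1 f).trans (h2 f)⟩

/-- The complete regularisation of a topological space, as a set of equivalence classes. -/
def CR (X : Type*) [TopologicalSpace X] : Type _ := Quotient (crSetoid X)

/-- The complete regularisation quotient map. -/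
def crMk (X : Type*) [TopologicalSpace X] (x : X) : CR X := Quotient.mk (crSetoid X) x

/-- The function on `CR X` induced by a bounded continuous function on `X`. -/
def crLift {X : Type*} [TopologicalSpace X] (f : BoundedContinuousFunction X ℝ) : CR X → ℝ :=
  Quotient.lift f fun _ _ h => h f

/-- The topology `τ_cr` on the complete regularisation: the weak topology induced by the
functions coming from bounded continuous functions on `X`. -/
instance CR.instTopologicalSpace (X : Type*) [TopologicalSpace X] : TopologicalSpace (CR X) :=
  ⨅ f : BoundedContinuousFunction X ℝ, TopologicalSpace.induced (crLift f) inferInstance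

/-- The topology generated by cozero sets of continuous real-valued functions. -/
def cozTop (X : Type*) [TopologicalSpace X] : TopologicalSpace X :=
  TopologicalSpace.generateFrom {U | ∃ f : C(X, ℝ), U = {x | f x ≠ 0}}

/-- A space is w-compact if every open cover has a finite subfamily whose union is dense in the
topology generated by cozero sets. -/
def WCompact (X : Type*) [TopologicalSpace X] : Prop :=
  ∀ U : Set (Set X), (∀ u ∈ U, IsOpen u) → ⋃₀ U = Set.univ →
    ∃ F ⊆ U, F.Finite ∧ @closure X (cozTop X) (⋃₀ F) = Set.univ

/-!
The complete regularisation `CR X` is completely regular, and in a completely regular space the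
cozero sets form a base, so there w-compactness is ordinary compactness. Given `x`, the image in
`CR X` of the w-compact closure of a cozero neighbourhood `{f ≠ 0}` of `x` is a continuous image of
a w-compact space inside a completely regular space, hence compact; it contains the open set
`{crLift f ≠ 0}` around the class of `x`. So `CR X` is weakly locally compact, and being regular
it is locally compact.
-/

open Set Filter TopologicalSpace

section CompleteRegularisation

variable {X : Type*} [TopologicalSpace X]

theorem continuous_crLift (f : BoundedContinuousFunction X ℝ) : Continuous (crLift f) :=
  continuous_iInf_dom (i := f) continuous_induced_dom

theorem continuous_crMk : Continuous (crMk X) :=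
  continuous_iInf_rng.mpr fun f => continuous_induced_rng.mpr f.continuous

instance CR.instCompletelyRegularSpace : CompletelyRegularSpace (CR X) :=
  completelyRegularSpace_iInf fun _ => completelyRegularSpace_induced inferInstance _

theorem crMk_image_cozero_mem_nhds (f : BoundedContinuousFunction X ℝ) {x : X} (hx : f x ≠ 0) :
    crMk X '' {y | f y ≠ 0} ∈ 𝓝 (crMk X x) := by
  refine mem_of_superset ((isOpen_compl_singleton.preimage (continuous_crLift f)).mem_nhds hx) ?_
  rintro p (hp : crLift f p ≠ 0)
  obtain ⟨y, rfl⟩ := Quotient.exists_rep p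
  exact mem_image_of_mem (crMk X) hp

end CompleteRegularisation

theorem isTopologicalBasis_cozero (Y : Type*) [TopologicalSpace Y] [CompletelyRegularSpace Y] :
    IsTopologicalBasis {U : Set Y | ∃ f : C(Y, ℝ), U = {y | f y ≠ 0}} := by
  refine isTopologicalBasis_of_isOpen_of_nhds ?_ fun a u hau hu => ?_
  · rintro u ⟨f, rfl⟩
    exact isOpen_compl_singleton.preimage f.continuous
  obtain ⟨f, hf, hfa, hf1⟩ := CompletelyRegularSpace.completely_regular_isOpen a u hu hau
  refine ⟨{y | (1 - (f y : ℝ)) ≠ 0}, ⟨⟨fun y => 1 - (f y : ℝ), by fun_prop⟩, rfl⟩, by simp [hfa],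
    fun y hy => ?_⟩
  by_contra hyu
  exact hy (by simp [hf1 hyu])

theorem cozTop_eq (Y : Type*) [t : TopologicalSpace Y] [CompletelyRegularSpace Y] :
    cozTop Y = t :=
  (isTopologicalBasis_cozero Y).eq_generateFrom.symm

theorem Continuous.continuous_cozTop {A B : Type*} [TopologicalSpace A] [TopologicalSpace B]
    {φ : A → B} (hφ : Continuous φ) : Continuous[cozTop A, cozTop B] φ := by
  rw [cozTop, cozTop, continuous_generateFrom_iff]
  rintro u ⟨g, rfl⟩
  exact isOpen_generateFrom_of_mem ⟨g.comp ⟨φ, hφ⟩, rfl⟩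

theorem WCompact.of_surjective {A B : Type*} [TopologicalSpace A] [TopologicalSpace B]
    {φ : A → B} (hw : WCompact A) (hφ : Continuous φ) (hs : Function.Surjective φ) :
    WCompact B := by
  intro U hUopen hUcov
  obtain ⟨F, hFU, hFfin, hFdense⟩ := hw (preimage φ '' U)
    (forall_mem_image.mpr fun u hu => (hUopen u hu).preimage hφ)
    (by rw [sUnion_image, ← preimage_sUnion, hUcov, preimage_univ])
  -- surjectivity makes `preimage φ` injective, so only finitely many members of `U` pull back into `F`
  refine ⟨{u ∈ U | φ ⁻¹' u ∈ F}, sep_subset _ _,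
    (hFfin.preimage (preimage_injective.mpr hs).injOn).subset fun u hu => hu.2, ?_⟩
  have hsub : φ '' ⋃₀ F ⊆ ⋃₀ {u ∈ U | φ ⁻¹' u ∈ F} := by
    rintro _ ⟨a, ⟨v, hvF, hav⟩, rfl⟩
    obtain ⟨u, huU, rfl⟩ := hFU hvF
    exact ⟨u, ⟨huU, hvF⟩, hav⟩
  have hcoz := hφ.continuous_cozTop
  let := cozTop A
  let := cozTop B
  rw [← dense_iff_closure_eq] at hFdense ⊢
  exact (hs.denseRange.dense_image hcoz hFdense).mono hsub

theorem WCompact.compactSpace {Y : Type*} [TopologicalSpace Y] [CompletelyRegularSpace Y]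
    (hw : WCompact Y) : CompactSpace Y := by
  classical
  refine ⟨isCompact_of_finite_subcover fun {ι} U hU hcov => ?_⟩
  have hshrink : ⋃₀ {V : Set Y | IsOpen V ∧ ∃ i, closure V ⊆ U i} = univ := by
    refine eq_univ_of_forall fun y => ?_
    obtain ⟨i, hi⟩ := mem_iUnion.mp (hcov (mem_univ y))
    obtain ⟨t, ht, htc, htU⟩ := exists_mem_nhds_isClosed_subset ((hU i).mem_nhds hi)
    exact ⟨interior t, ⟨isOpen_interior, i, (closure_minimal interior_subset htc).trans htU⟩,
      mem_interior_iff_mem_nhds.mpr ht⟩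
  obtain ⟨F, hFsub, hFfin, hFcl⟩ := hw _ (fun V hV => hV.1) hshrink
  rw [cozTop_eq, hFfin.closure_sUnion] at hFcl
  choose i hi using fun v : F => (hFsub v.2).2
  have := hFfin.fintype
  refine ⟨Finset.univ.image i, fun y _ => ?_⟩
  obtain ⟨v, hvF, hyv⟩ := mem_iUnion₂.mp (hFcl.symm ▸ mem_univ y : y ∈ ⋃ v ∈ F, closure v)
  exact mem_biUnion (Finset.mem_image_of_mem _ (Finset.mem_univ ⟨v, hvF⟩)) (hi ⟨v, hvF⟩ hyv)

theorem WCompact.isCompact_range {A Y : Type*} [TopologicalSpace A] [TopologicalSpace Y]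
    [CompletelyRegularSpace Y] (hw : WCompact A) {φ : A → Y} (hφ : Continuous φ) :
    IsCompact (range φ) := by
  have : CompactSpace (range φ) :=
    (hw.of_surjective (hφ.subtype_mk _) rangeFactorization_surjective).compactSpace
  exact isCompact_iff_compactSpace.mpr this

theorem stmt8 {X : Type*} [TopologicalSpace X]
    (h : ∀ x : X, ∃ f : C(X, ℝ), (∀ y, f y ∈ Set.Icc (0 : ℝ) 1) ∧
      {y | f y ≠ 0} ∈ nhds x ∧ WCompact ↥(closure {y | f y ≠ 0})) :
    LocallyCompactSpace (CR X) := by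
  have : WeaklyLocallyCompactSpace (CR X) := by
    refine ⟨fun p => ?_⟩
    obtain ⟨x, rfl⟩ := Quotient.exists_rep p
    obtain ⟨f, hf01, hfx, hw⟩ := h x
    let F := BoundedContinuousFunction.mkOfBound f 1 fun a b => by
      simpa using Real.dist_le_of_mem_Icc (hf01 a) (hf01 b)
    refine ⟨crMk X '' closure {y | f y ≠ 0}, ?_, ?_⟩
    · rw [image_eq_range]
      exact hw.isCompact_range (continuous_crMk.comp continuous_subtype_val)
    · exact mem_of_superset (crMk_image_cozero_mem_nhds F (mem_of_mem_nhds hfx))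
        (image_mono subset_closure)
  infer_instance
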